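/- Let p : 𝕊 → ℂ be holomorphic on the strip 𝕊 = {w ∈ ℂ : 0 < Re w < 1} with Re p(w) ≥ 0 for all w ∈ 𝕊. Then for any real a < b there exists a constant C₁(a,b,p) > 0 such that ∫ₐᵇ Re p(u + iv) dv ≤ C₁(a,b,p) for all u ∈ (0,1). -/

import Mathlib

open Complex Set MeasureTheory intervalIntegral
open scoped Real

/-!
Weight `Re p` by the first Dirichlet eigenfunction `k v = sin (β (v - a'))` of an interval
`[a', b'] ⊃ [a, b]` and set `λ u = ∫ Re p (u + v I) k v dv` over `[a', b']`. As `Re p` is harmonic,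
two integrations by parts in `v` give `λ'' = β² λ - β (Re p (u + a' I) + Re p (u + b' I)) ≤ β² λ`.
Comparing `λ` with `cosh (β (u - u₀))` through their Wronskian bounds it on `(0, 1)` by the solution
of `y'' = β² y` with the data of `λ` at `u₀`; as `k` has a positive lower bound on `[a, b]`, this
bounds the integral.
-/

theorem isMaxOn_of_hasDerivAt_mul_sub_nonpos {f f' : ℝ → ℝ} {c d x₀ : ℝ}
    (hf : ∀ x ∈ Ioo c d, HasDerivAt f (f' x) x)
    (hsign : ∀ x ∈ Ioo c d, f' x * (x - x₀) ≤ 0) (hx₀ : x₀ ∈ Ioo c d) :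
    IsMaxOn f (Ioo c d) x₀ := by
  intro x hx
  have hsub : uIcc x₀ x ⊆ Ioo c d := ordConnected_Ioo.uIcc_subset hx₀ hx
  have hcont : ContinuousOn f (uIcc x₀ x) :=
    fun y hy ↦ (hf y (hsub hy)).continuousAt.continuousWithinAt
  rcases le_total x₀ x with h | h
  · rw [uIcc_of_le h] at hsub hcont
    refine antitoneOn_of_hasDerivWithinAt_nonpos (f' := f') (convex_Icc x₀ x) hcont
      (fun y hy ↦ ?_) (fun y hy ↦ ?_) (left_mem_Icc.2 h) (right_mem_Icc.2 h) h <;>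
      rw [interior_Icc] at hy
    · exact (hf y (hsub (Ioo_subset_Icc_self hy))).hasDerivWithinAt
    · exact nonpos_of_mul_nonpos_left (hsign y (hsub (Ioo_subset_Icc_self hy))) (sub_pos.2 hy.1)
  · rw [uIcc_of_ge h] at hsub hcont
    refine monotoneOn_of_hasDerivWithinAt_nonneg (f' := f') (convex_Icc x x₀) hcont
      (fun y hy ↦ ?_) (fun y hy ↦ ?_) (left_mem_Icc.2 h) (right_mem_Icc.2 h) h <;>
      rw [interior_Icc] at hy
    · exact (hf y (hsub (Ioo_subset_Icc_self hy))).hasDerivWithinAt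
    · exact nonneg_of_mul_nonpos_left (hsign y (hsub (Ioo_subset_Icc_self hy))) (sub_neg.2 hy.2)

theorem hasDerivAt_const_mul_sub_const (β x₀ x : ℝ) :
    HasDerivAt (fun x ↦ β * (x - x₀)) β x := by
  simpa using ((hasDerivAt_id x).sub_const x₀).const_mul β

theorem nonpos_of_second_deriv_le_sq_mul {f f' f'' : ℝ → ℝ} {c d x₀ β : ℝ}
    (hf : ∀ x ∈ Ioo c d, HasDerivAt f (f' x) x) (hf' : ∀ x ∈ Ioo c d, HasDerivAt f' (f'' x) x)
    (hle : ∀ x ∈ Ioo c d, f'' x ≤ β ^ 2 * f x) (hx₀ : x₀ ∈ Ioo c d)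
    (hf₀ : f x₀ = 0) (hf'₀ : f' x₀ = 0) {x : ℝ} (hx : x ∈ Ioo c d) :
    f x ≤ 0 := by
  set C : ℝ → ℝ := fun x ↦ Real.cosh (β * (x - x₀))
  set C' : ℝ → ℝ := fun x ↦ β * Real.sinh (β * (x - x₀))
  have hlin := hasDerivAt_const_mul_sub_const β x₀
  have hC (x : ℝ) : HasDerivAt C (C' x) x := by
    simpa [C, C', mul_comm] using (hlin x).cosh
  have hC' (x : ℝ) : HasDerivAt C' (β ^ 2 * C x) x :=
    ((hlin x).sinh.const_mul β).congr_deriv (by ring)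
  have hCpos (x : ℝ) : 0 < C x := Real.cosh_pos _
  -- The Wronskian `W` of `f` and `C` decreases and vanishes at `x₀`, and `(f / C)' = W / C²`.
  set W : ℝ → ℝ := fun x ↦ f' x * C x - f x * C' x
  have hW : ∀ x ∈ Ioo c d, HasDerivAt W ((f'' x - β ^ 2 * f x) * C x) x := fun x hx ↦
    (((hf' x hx).mul (hC x)).sub ((hf x hx).mul (hC' x))).congr_deriv (by ring)
  have hW_anti : AntitoneOn W (Ioo c d) := by
    refine antitoneOn_of_hasDerivWithinAt_nonpos (f' := fun x ↦ (f'' x - β ^ 2 * f x) * C x)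
      (convex_Ioo c d)
      (fun x hx ↦ (hW x hx).continuousAt.continuousWithinAt) (fun x hx ↦ ?_) (fun x hx ↦ ?_) <;>
      rw [interior_Ioo] at hx
    · exact (hW x hx).hasDerivWithinAt
    · exact mul_nonpos_of_nonpos_of_nonneg (by linarith [hle x hx]) (hCpos x).le
  have hW₀ : W x₀ = 0 := by simp [W, hf₀, hf'₀]
  have hmax : IsMaxOn (fun x ↦ f x / C x) (Ioo c d) x₀ := by
    refine isMaxOn_of_hasDerivAt_mul_sub_nonpos (fun x hx ↦ (hf x hx).div (hC x) (hCpos x).ne')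
      (fun y hy ↦ ?_) hx₀
    rw [div_mul_eq_mul_div]
    refine div_nonpos_of_nonpos_of_nonneg ?_ (sq_nonneg _)
    rcases le_total x₀ y with h | h
    · exact mul_nonpos_of_nonpos_of_nonneg (hW₀ ▸ hW_anti hx₀ hy h) (sub_nonneg.2 h)
    · exact mul_nonpos_of_nonneg_of_nonpos (hW₀ ▸ hW_anti hy hx₀ h) (sub_nonpos.2 h)
  have := hmax hx
  simp only [hf₀, zero_div] at this
  simpa using (div_le_iff₀ (hCpos x)).1 this

theorem le_cosh_sinh_of_second_deriv_le_sq_mul {f f' f'' : ℝ → ℝ} {c d x₀ β : ℝ} (hβ : β ≠ 0)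
    (hf : ∀ x ∈ Ioo c d, HasDerivAt f (f' x) x) (hf' : ∀ x ∈ Ioo c d, HasDerivAt f' (f'' x) x)
    (hle : ∀ x ∈ Ioo c d, f'' x ≤ β ^ 2 * f x) (hx₀ : x₀ ∈ Ioo c d) {x : ℝ} (hx : x ∈ Ioo c d) :
    f x ≤ f x₀ * Real.cosh (β * (x - x₀)) + f' x₀ / β * Real.sinh (β * (x - x₀)) := by
  set Y : ℝ → ℝ := fun x ↦
    f x₀ * Real.cosh (β * (x - x₀)) + f' x₀ / β * Real.sinh (β * (x - x₀))
  set Y' : ℝ → ℝ := fun x ↦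
    f x₀ * β * Real.sinh (β * (x - x₀)) + f' x₀ * Real.cosh (β * (x - x₀))
  have hlin := hasDerivAt_const_mul_sub_const β x₀
  have hY (x : ℝ) : HasDerivAt Y (Y' x) x :=
    (((hlin x).cosh.const_mul _).add ((hlin x).sinh.const_mul _)).congr_deriv (by field_simp; ring)
  have hY' (x : ℝ) : HasDerivAt Y' (β ^ 2 * Y x) x :=
    (((hlin x).sinh.const_mul _).add ((hlin x).cosh.const_mul _)).congr_deriv
      (by simp only [Y]; field_simp)
  have := nonpos_of_second_deriv_le_sq_mul (β := β) (f := f - Y) (f' := f' - Y')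
    (f'' := f'' - fun x ↦ β ^ 2 * Y x) (fun x hx ↦ (hf x hx).sub (hY x))
    (fun x hx ↦ (hf' x hx).sub (hY' x))
    (fun x hx ↦ by simp only [Pi.sub_apply]; linarith [hle x hx]) hx₀ (by simp [Y]) (by simp [Y'])
    hx
  simpa [sub_nonpos] using this

theorem integral_mul_deriv_deriv_eq_deriv_deriv_mul {k k' k'' φ φ' φ'' : ℝ → ℝ} {a b : ℝ}
    (hk : ∀ x ∈ uIcc a b, HasDerivAt k (k' x) x) (hk' : ∀ x ∈ uIcc a b, HasDerivAt k' (k'' x) x)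
    (hφ : ∀ x ∈ uIcc a b, HasDerivAt φ (φ' x) x) (hφ' : ∀ x ∈ uIcc a b, HasDerivAt φ' (φ'' x) x)
    (hk''i : IntervalIntegrable k'' volume a b) (hφ''i : IntervalIntegrable φ'' volume a b) :
    ∫ x in a..b, k x * φ'' x =
      (∫ x in a..b, k'' x * φ x) + (k b * φ' b - k' b * φ b) - (k a * φ' a - k' a * φ a) := by
  have hk'i : IntervalIntegrable k' volume a b := ContinuousOn.intervalIntegrable
    fun x hx ↦ (hk' x hx).continuousAt.continuousWithinAt
  have hφ'i : IntervalIntegrable φ' volume a b := ContinuousOn.intervalIntegrable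
    fun x hx ↦ (hφ' x hx).continuousAt.continuousWithinAt
  rw [integral_mul_deriv_eq_deriv_mul hk hφ' hk'i hφ''i,
    integral_mul_deriv_eq_deriv_mul hk' hφ hk''i hφ'i]
  ring

theorem mul_integral_le_integral_mul {φ k : ℝ → ℝ} {a b a' b' m : ℝ} (ha : a' ≤ a) (hab : a ≤ b)
    (hb : b ≤ b') (hφ : Continuous φ) (hk : Continuous k) (hφ₀ : ∀ v ∈ Icc a' b', 0 ≤ φ v)
    (hk₀ : ∀ v ∈ Icc a' b', 0 ≤ k v) (hkm : ∀ v ∈ Icc a b, m ≤ k v) :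
    m * ∫ v in a..b, φ v ≤ ∫ v in a'..b', φ v * k v := by
  rw [← intervalIntegral.integral_const_mul]
  calc ∫ v in a..b, m * φ v ≤ ∫ v in a..b, φ v * k v := by
        refine integral_mono_on hab ((hφ.const_mul m).intervalIntegrable a b)
          ((hφ.mul hk).intervalIntegrable a b) fun v hv ↦ ?_
        rw [mul_comm]
        exact mul_le_mul_of_nonneg_left (hkm v hv) (hφ₀ v ⟨ha.trans hv.1, hv.2.trans hb⟩)
    _ ≤ ∫ v in a'..b', φ v * k v := by
        refine integral_mono_interval ha hab hb (ae_restrict_of_forall_mem measurableSet_Ioc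
          fun v hv ↦ mul_nonneg (hφ₀ v (Ioc_subset_Icc_self hv)) (hk₀ v (Ioc_subset_Icc_self hv)))
          ((hφ.mul hk).intervalIntegrable a' b')

section Strip

variable {c d : ℝ} {q : ℂ → ℂ}

theorem hasDerivAt_re_comp_add_mul_I {q' : ℂ} {x v : ℝ} (hq : HasDerivAt q q' (x + v * I)) :
    HasDerivAt (fun y : ℝ ↦ (q (y + v * I)).re) q'.re x :=
  (hq.comp_add_const (x : ℂ) (v * I)).real_of_complex

theorem hasDerivAt_re_comp_mul_I_add {q' : ℂ} {u v : ℝ} (hq : HasDerivAt q q' (u + v * I)) :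
    HasDerivAt (fun y : ℝ ↦ (q (u + y * I)).re) (I * q').re v := by
  have : HasDerivAt (fun z : ℂ ↦ q (u + z * I)) (q' * I) v :=
    hq.comp (v : ℂ) ((hasDerivAt_mul_const I).const_add (u : ℂ))
  simpa only [mul_comm q'] using this.real_of_complex

noncomputable def weightedReIntegral (q : ℂ → ℂ) (k : ℝ → ℝ) (a b u : ℝ) : ℝ :=
  ∫ v in a..b, (q (u + v * I)).re * k v

theorem add_mul_I_mem_strip {u : ℝ} (hu : u ∈ Ioo c d) (v : ℝ) :
    (u + v * I : ℂ) ∈ re ⁻¹' Ioo c d := by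
  simpa using hu

theorem continuous_comp_add_mul_I (hq : ContinuousOn q (re ⁻¹' Ioo c d)) {u : ℝ}
    (hu : u ∈ Ioo c d) : Continuous fun v : ℝ ↦ q (u + v * I) :=
  hq.comp_continuous (by fun_prop) (add_mul_I_mem_strip hu)

theorem hasDerivAt_weightedReIntegral (hq : DifferentiableOn ℂ q (re ⁻¹' Ioo c d))
    {k : ℝ → ℝ} (hk : Continuous k) (a b : ℝ) {u : ℝ} (hu : u ∈ Ioo c d) :
    HasDerivAt (weightedReIntegral q k a b) (weightedReIntegral (deriv q) k a b u) u := by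
  have hS : IsOpen (re ⁻¹' Ioo c d) := isOpen_Ioo.preimage continuous_re
  obtain ⟨r, s, -, hrs, hsub⟩ := exists_Icc_mem_subset_of_mem_nhds (isOpen_Ioo.mem_nhds hu)
  obtain ⟨M, hM⟩ :=
    (isCompact_Icc.prod (isCompact_uIcc (a := a) (b := b))).exists_bound_of_continuousOn
    (f := fun z : ℝ × ℝ ↦ (deriv q (z.1 + z.2 * I)).re * k z.2) <|
      (continuous_re.comp_continuousOn ((hq.deriv hS).continuousOn.comp (by fun_prop)
        fun z hz ↦ add_mul_I_mem_strip (hsub (mem_prod.1 hz).1) z.2)).mul (by fun_prop)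
  refine (hasDerivAt_integral_of_dominated_loc_of_deriv_le
    (F := fun (x v : ℝ) ↦ (q (x + v * I)).re * k v)
    (F' := fun (x v : ℝ) ↦ (deriv q (x + v * I)).re * k v) (bound := fun _ ↦ M) hrs
    (Filter.eventually_of_mem hrs fun x hx ↦ ?_) ?_ ?_ (ae_of_all _ fun v hv x hx ↦ ?_)
    intervalIntegrable_const (ae_of_all _ fun v hv x hx ↦ ?_)).2
  · exact ((continuous_re.comp (continuous_comp_add_mul_I hq.continuousOn (hsub hx))).mul
      hk).aestronglyMeasurable
  · exact ((continuous_re.comp (continuous_comp_add_mul_I hq.continuousOn hu)).mul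
      hk).intervalIntegrable a b
  · exact ((continuous_re.comp (continuous_comp_add_mul_I (hq.deriv hS).continuousOn hu)).mul
      hk).aestronglyMeasurable
  · exact hM (x, v) ⟨hx, uIoc_subset_uIcc hv⟩
  · have hw := add_mul_I_mem_strip (hsub hx) v
    exact (hasDerivAt_re_comp_add_mul_I
      ((hq.differentiableAt (hS.mem_nhds hw)).hasDerivAt)).mul_const (k v)

theorem weightedReIntegral_deriv_deriv_le (hq : DifferentiableOn ℂ q (re ⁻¹' Ioo c d))
    (hre : ∀ w ∈ re ⁻¹' Ioo c d, 0 ≤ (q w).re) {a b β : ℝ} (hβ : 0 ≤ β)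
    (hβab : β * (b - a) = π) {u : ℝ} (hu : u ∈ Ioo c d) :
    weightedReIntegral (deriv (deriv q)) (fun v ↦ Real.sin (β * (v - a))) a b u ≤
      β ^ 2 * weightedReIntegral q (fun v ↦ Real.sin (β * (v - a))) a b u := by
  have hS : IsOpen (re ⁻¹' Ioo c d) := isOpen_Ioo.preimage continuous_re
  have hq' := hq.deriv hS
  have hq'' := hq'.deriv hS
  have hd {g : ℂ → ℂ} (hg : DifferentiableOn ℂ g (re ⁻¹' Ioo c d)) (v : ℝ) :
      HasDerivAt g (deriv g (u + v * I)) (u + v * I) :=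
    (hg.differentiableAt (hS.mem_nhds (add_mul_I_mem_strip hu v))).hasDerivAt
  have hlin := hasDerivAt_const_mul_sub_const β a
  have hq''c := continuous_comp_add_mul_I hq''.continuousOn hu
  -- Cauchy–Riemann along the vertical line: `φ v = Re q (u + v I)` has `φ'' = -Re q'' (u + v I)`.
  have hgreen := integral_mul_deriv_deriv_eq_deriv_deriv_mul (a := a) (b := b)
    (k := fun v ↦ Real.sin (β * (v - a))) (k' := fun v ↦ β * Real.cos (β * (v - a)))
    (k'' := fun v ↦ -(β ^ 2 * Real.sin (β * (v - a))))
    (φ := fun v ↦ (q (u + v * I)).re) (φ' := fun v ↦ (I * deriv q (u + v * I)).re)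
    (φ'' := fun v ↦ (I * (I * deriv (deriv q) (u + v * I))).re)
    (fun v _ ↦ (hlin v).sin.congr_deriv (mul_comm _ _))
    (fun v _ ↦ ((hlin v).cos.const_mul β).congr_deriv (by ring))
    (fun v _ ↦ hasDerivAt_re_comp_mul_I_add (hd hq v))
    (fun v _ ↦ hasDerivAt_re_comp_mul_I_add ((hd hq' v).const_mul I))
    (Continuous.intervalIntegrable (by fun_prop) a b)
    (Continuous.intervalIntegrable (by fun_prop) a b)
  have hlhs : ∫ v in a..b, Real.sin (β * (v - a)) * (I * (I * deriv (deriv q) (u + v * I))).re =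
      -weightedReIntegral (deriv (deriv q)) (fun v ↦ Real.sin (β * (v - a))) a b u := by
    rw [weightedReIntegral, ← intervalIntegral.integral_neg]
    congr 1 with v
    simp [mul_comm]
  have hrhs : ∫ v in a..b, -(β ^ 2 * Real.sin (β * (v - a))) * (q (u + v * I)).re =
      -(β ^ 2 * weightedReIntegral q (fun v ↦ Real.sin (β * (v - a))) a b u) := by
    rw [weightedReIntegral, ← intervalIntegral.integral_const_mul, ← intervalIntegral.integral_neg]
    congr 1 with v
    ring
  simp only [hβab, sub_self, mul_zero, Real.sin_pi, Real.sin_zero, Real.cos_pi, Real.cos_zero,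
    zero_mul, zero_sub, mul_one, hlhs, hrhs] at hgreen
  have ha := mul_nonneg hβ (hre _ (add_mul_I_mem_strip hu a))
  have hb := mul_nonneg hβ (hre _ (add_mul_I_mem_strip hu b))
  linarith

theorem bddAbove_weightedReIntegral_image (hq : DifferentiableOn ℂ q (re ⁻¹' Ioo c d))
    (hre : ∀ w ∈ re ⁻¹' Ioo c d, 0 ≤ (q w).re) {a b β : ℝ} (hβ : 0 < β)
    (hβab : β * (b - a) = π) :
    BddAbove (weightedReIntegral q (fun v ↦ Real.sin (β * (v - a))) a b '' Ioo c d) := by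
  rcases (Ioo c d).eq_empty_or_nonempty with h | ⟨x₀, hx₀⟩
  · simp [h]
  set k := fun v ↦ Real.sin (β * (v - a))
  have hk : Continuous k := by fun_prop
  have hq' := hq.deriv (isOpen_Ioo.preimage continuous_re)
  obtain ⟨M, hM⟩ := isCompact_Icc.bddAbove_image (K := Icc c d) (Continuous.continuousOn
    (f := fun x ↦ weightedReIntegral q k a b x₀ * Real.cosh (β * (x - x₀)) +
      weightedReIntegral (deriv q) k a b x₀ / β * Real.sinh (β * (x - x₀))) (by fun_prop))
  refine ⟨M, forall_mem_image.2 fun u hu ↦ (le_cosh_sinh_of_second_deriv_le_sq_mul hβ.ne'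
    (fun x hx ↦ hasDerivAt_weightedReIntegral hq hk a b hx)
    (fun x hx ↦ hasDerivAt_weightedReIntegral hq' hk a b hx)
    (fun x hx ↦ weightedReIntegral_deriv_deriv_le hq hre hβ.le hβab hx) hx₀ hu).trans
    (hM (mem_image_of_mem _ (Ioo_subset_Icc_self hu)))⟩

end Strip

theorem strip_re_integral_bounded
    (p : ℂ → ℂ)
    (hp : DifferentiableOn ℂ p {w : ℂ | 0 < w.re ∧ w.re < 1})
    (hRe : ∀ w ∈ {w : ℂ | 0 < w.re ∧ w.re < 1}, 0 ≤ (p w).re)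
    (a b : ℝ) (hab : a < b) :
    ∃ C : ℝ, 0 < C ∧ ∀ u ∈ Ioo (0:ℝ) 1,
      (∫ v in a..b, (p ((u : ℂ) + (v : ℂ) * Complex.I)).re) ≤ C := by
  set β := π / (b + 1 - (a - 1))
  have hβab : β * (b + 1 - (a - 1)) = π := div_mul_cancel₀ _ (by linarith)
  have hβ : 0 < β := div_pos Real.pi_pos (by linarith)
  set k := fun v ↦ Real.sin (β * (v - (a - 1)))
  have hk : Continuous k := by fun_prop
  have hk₀ : ∀ v ∈ Icc (a - 1) (b + 1), 0 ≤ k v := fun v hv ↦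
    Real.sin_nonneg_of_nonneg_of_le_pi (by nlinarith [hv.1]) (by nlinarith [hv.2])
  obtain ⟨v₀, hv₀, hmin⟩ := isCompact_Icc.exists_isMinOn (nonempty_Icc.2 hab.le) hk.continuousOn
  have hm : 0 < k v₀ :=
    Real.sin_pos_of_pos_of_lt_pi (by nlinarith [hv₀.1]) (by nlinarith [hv₀.2])
  obtain ⟨M, hM⟩ := bddAbove_weightedReIntegral_image hp hRe hβ hβab
  refine ⟨max (M / k v₀) 1, by positivity, fun u hu ↦ le_max_of_le_left ((le_div_iff₀' hm).2 ?_)⟩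
  exact (mul_integral_le_integral_mul (by linarith) hab.le (by linarith)
    (continuous_re.comp (continuous_comp_add_mul_I hp.continuousOn hu)) hk
    (fun v _ ↦ hRe _ (add_mul_I_mem_strip hu v)) hk₀ hmin).trans (hM (mem_image_of_mem _ hu))
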